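/- (Target model error under cross-sampling; Lemma 2 of the paper, steps h ≥ 1.) Let S be a finite state space, 𝒜 a finite action set of size A, H ∈ ℕ, d₀ an initial distribution on S, d ∈ ℕ, and K ∈ ℕ. Let P_1,…,P_K and P_target be transition models that are low rank with a shared feature: P_{k;h}(s'|s,a) = ⟨φ*_h(s,a), μ*_{k;h}(s')⟩ and P_{target;h}(s'|s,a) = ⟨φ*_h(s,a), μ*_{target;h}(s')⟩, where ‖φ*_h(s,a)‖₂ ≤ 1 for all h,s,a. Assume the point-wise linear span condition: for every h and s' there are reals α_{k;h}(s') with μ*_{target;h}(s') = Σ_{k=1}^K α_{k;h}(s') μ*_{k;h}(s') and |α_{k;h}(s')| ≤ α_max. Assume there are policies π_1,…,π_K and λ_min > 0 with λ_min( Σ_{(s,a)} d^{π_k}_{P_k;h}(s,a) φ*_h(s,a)φ*_h(s,a)ᵀ ) ≥ λ_min for every k and every h ∈ {0,…,H−1}. Let φ̂_h : S×𝒜 → ℝ^d and μ̂_{k;h} : S → ℝ^d be arbitrary, define the error err_{k;h}(s,a) := Σ_{s'} |⟨φ̂_h(s,a), μ̂_{k;h}(s')⟩ − ⟨φ*_h(s,a),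 μ*_{k;h}(s')⟩|, and for h ∈ {1,…,H−1} let ν_{kj;h} be the distribution on S×𝒜 given by ν_{kj;h}(s,a) := (1/A) Σ_{(s̃,ã)} d^{π_k}_{P_k;h−1}(s̃,ã) P_{j;h−1}(s|s̃,ã). Suppose the cross-sampled MLE guarantee: for every h ∈ {1,…,H−1}, Σ_{k=1}^K Σ_{j=1}^K E_{(s,a)∼ν_{kj;h}}[ err_{k;h}(s,a)² ] ≤ ζ for some ζ ≥ 0. Define μ̃_h(s') := Σ_{k=1}^K α_{k;h}(s') μ̂_{k;h}(s'). Then for every h ∈ {1,…,H−1} and every policy π: Σ_{(s,a)} d^π_{P_target;h}(s,a) · Σ_{s'} |⟨φ̂_h(s,a), μ̃_h(s')⟩ − P_{target;h}(s'|s,a)| ≤ √( A · α_max³ · K · ζ / λ_min ). Moreover, if additionally ‖Σ_{s'} g(s') μ̂_{k;h}(s')‖₂ ≤ √d for every g : S → [−1,1] and every k, then for every g : S → [0,1], ‖Σ_{s'} g(s') μ̃_h(s')‖₂ ≤ ᾱ√d, where ᾱ := Σ_{k=1}^K max_{s'} |α_{k;h}(s')|. -/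

import Mathlib

/-!
Write `h = m + 1`. By the span condition the target error at `(s, a)` is at most
`α_max Σ_k err_k(s, a)`, so it suffices to bound each `T_k := E_{d^π_{P_target;h}}[err_k]`.
As the target transition at step `m` is linear in `φ*`, `T_k = E_{d^π_{P_target;m}} ⟨φ*, w_k⟩`
for one vector `w_k`, whence `T_k ≤ ‖w_k‖` because `‖φ*‖ ≤ 1`. Coverage of `π_k` gives
`λ_min ‖w_k‖² ≤ E_{d^{π_k}_{P_k;m}} ⟨φ*, w_k⟩²`, and Jensen's inequality together with
`P_target ≤ α_max Σ_j P_j` bounds the right side by `α_max A Σ_j E_{ν_kj}[err_k²]`.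
Cauchy–Schwarz over `k` and the MLE guarantee finish. For the norm bound, split `μ̃` over `k`
and rescale each weight `g α_k` into `[-1, 1]`.
-/

noncomputable section

open Finset

/-- `p` is a probability distribution on the finite type `X`. -/
def IsDist {X : Type*} [Fintype X] (p : X → ℝ) : Prop :=
  (∀ x, 0 ≤ p x) ∧ (∑ x, p x) = 1

variable {S Act : Type*} [Fintype S] [Fintype Act]

/-- Occupancy measure `d^π_{P;h}(s,a)`: the probability that, executing the policy `π`
in the transition model `P` starting from `d0`, the state-action pair at step `h`
is `(s,a)`. -/
def occ (d0 : S → ℝ) (π : ℕ → S → Act → ℝ) (P : ℕ → S → Act → S → ℝ) :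
    ℕ → S → Act → ℝ
  | 0 => fun s a => d0 s * π 0 s a
  | h + 1 => fun s' a' => (∑ s, ∑ a, occ d0 π P h s a * P h s a s') * π (h + 1) s' a'

open Matrix

/-- The smallest eigenvalue of a symmetric matrix, expressed as the minimum of the
Rayleigh quotient `vᵀ M v` over unit vectors `v`. -/
noncomputable def lamMin {d : ℕ} (M : Matrix (Fin d) (Fin d) ℝ) : ℝ :=
  sInf {x | ∃ v : Fin d → ℝ, (∑ i, v i ^ 2) = 1 ∧ x = v ⬝ᵥ M.mulVec v}

lemma IsDist.le_one {X : Type*} [Fintype X] {p : X → ℝ} (hp : IsDist p) (x : X) : p x ≤ 1 :=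
  hp.2 ▸ single_le_sum (fun y _ => hp.1 y) (mem_univ x)

lemma IsDist.sq_sum_mul_le {X : Type*} [Fintype X] {p : X → ℝ} (hp : IsDist p) (f : X → ℝ) :
    (∑ x, p x * f x) ^ 2 ≤ ∑ x, p x * f x ^ 2 := by
  simpa only [hp.2, one_mul] using sum_sq_le_sum_mul_sum_of_sq_le_mul univ
    (fun x _ => hp.1 x) (fun x _ => mul_nonneg (hp.1 x) (sq_nonneg (f x)))
    (fun x _ => (by ring : (p x * f x) ^ 2 = p x * (p x * f x ^ 2)).le)

lemma IsDist.sq_sum_mul_le_sum_sq {X : Type*} [Fintype X] {p : X → ℝ} (hp : IsDist p)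
    (f : X → ℝ) : (∑ x, p x * f x) ^ 2 ≤ ∑ x, f x ^ 2 :=
  (hp.sq_sum_mul_le f).trans <| sum_le_sum fun x _ =>
    mul_le_of_le_one_left (sq_nonneg _) (hp.le_one x)

def nextState (ρ : S → Act → ℝ) (P : S → Act → S → ℝ) (s : S) : ℝ :=
  ∑ s₀, ∑ a₀, ρ s₀ a₀ * P s₀ a₀ s

lemma occ_succ (d0 : S → ℝ) (π : ℕ → S → Act → ℝ) (P : ℕ → S → Act → S → ℝ) (h : ℕ) (s : S)
    (a : Act) : occ d0 π P (h + 1) s a = nextState (occ d0 π P h) (P h) s * π (h + 1) s a :=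
  rfl

lemma sum_nextState_mul (ρ : S → Act → ℝ) (P : S → Act → S → ℝ) (f : S → ℝ) :
    ∑ s, nextState ρ P s * f s = ∑ s₀, ∑ a₀, ρ s₀ a₀ * ∑ s, P s₀ a₀ s * f s := by
  simp only [nextState, sum_mul, mul_sum, mul_assoc]
  rw [sum_comm]
  exact sum_congr rfl fun _ _ => sum_comm

lemma nextState_nonneg {ρ : S → Act → ℝ} {P : S → Act → S → ℝ} (hρ : ∀ s a, 0 ≤ ρ s a)
    (hP : ∀ s a s', 0 ≤ P s a s') (s : S) : 0 ≤ nextState ρ P s :=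
  sum_nonneg fun _ _ => sum_nonneg fun _ _ => mul_nonneg (hρ _ _) (hP _ _ _)

lemma occ_nonneg {d0 : S → ℝ} {π : ℕ → S → Act → ℝ} {P : ℕ → S → Act → S → ℝ}
    (hd0 : ∀ s, 0 ≤ d0 s) (hπ : ∀ t s a, 0 ≤ π t s a) (hP : ∀ t s a s', 0 ≤ P t s a s')
    (h : ℕ) (s : S) (a : Act) : 0 ≤ occ d0 π P h s a := by
  induction h generalizing s a with
  | zero => exact mul_nonneg (hd0 s) (hπ 0 s a)
  | succ h ih => exact mul_nonneg (nextState_nonneg ih (hP h) s) (hπ _ s a)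

lemma sum_sum_occ {d0 : S → ℝ} {π : ℕ → S → Act → ℝ} {P : ℕ → S → Act → S → ℝ}
    (hd0 : ∑ s, d0 s = 1) (hπ : ∀ t s, ∑ a, π t s a = 1) (hP : ∀ t s a, ∑ s', P t s a s' = 1)
    (h : ℕ) : ∑ s, ∑ a, occ d0 π P h s a = 1 := by
  induction h with
  | zero => simp only [occ, ← mul_sum, hπ, mul_one, hd0]
  | succ h ih =>
    simp only [occ_succ, ← mul_sum, hπ]
    simpa only [mul_one, hP, ih] using sum_nextState_mul (occ d0 π P h) (P h) fun _ => 1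

/-- The cross-sampling distribution `ν_{kj;h}` of the paper, with `ρ = d^{π_k}_{P_k;h-1}` and
`P = P_{j;h-1}`. -/
def uniformNext (ρ : S → Act → ℝ) (P : S → Act → S → ℝ) (s : S) (_ : Act) : ℝ :=
  1 / Fintype.card Act * nextState ρ P s

lemma uniformNext_nonneg {ρ : S → Act → ℝ} {P : S → Act → S → ℝ} (hρ : ∀ s a, 0 ≤ ρ s a)
    (hP : ∀ s a s', 0 ≤ P s a s') (s : S) (a : Act) : 0 ≤ uniformNext ρ P s a :=
  mul_nonneg (by positivity) (nextState_nonneg hρ hP s)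

lemma sum_nextState_mul_sum_eq_card_mul (ρ : S → Act → ℝ) (P : S → Act → S → ℝ)
    (f : S → Act → ℝ) :
    ∑ s, nextState ρ P s * ∑ a, f s a
      = Fintype.card Act * ∑ s, ∑ a, uniformNext ρ P s a * f s a := by
  rcases isEmpty_or_nonempty Act with _ | _
  · simp
  · simp only [uniformNext, mul_sum, mul_assoc]
    refine sum_congr rfl fun s _ => sum_congr rfl fun a _ => ?_
    field_simp

lemma nextState_mul_sum (ρ : S → Act → ℝ) {κ : Type*} [Fintype κ] (c : ℝ)
    (P : κ → S → Act → S → ℝ) (s : S) :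
    nextState ρ (fun s₀ a₀ s => c * ∑ j, P j s₀ a₀ s) s = c * ∑ j, nextState ρ (P j) s := by
  simp only [nextState, mul_sum, mul_left_comm (ρ _ _) c]
  exact (sum_congr rfl fun _ _ => sum_comm).trans sum_comm

lemma sum_nextState_mul_sum_eq_uniformNext {κ : Type*} [Fintype κ] (ρ : S → Act → ℝ) (c : ℝ)
    (P : κ → S → Act → S → ℝ) (f : S → Act → ℝ) :
    ∑ s, nextState ρ (fun s₀ a₀ s => c * ∑ j, P j s₀ a₀ s) s * ∑ a, f s a
      = c * Fintype.card Act * ∑ j, ∑ s, ∑ a, uniformNext ρ (P j) s a * f s a := by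
  simp only [nextState_mul_sum, mul_assoc, sum_mul, ← mul_sum]
  rw [sum_comm]
  simp only [sum_nextState_mul_sum_eq_card_mul, ← mul_sum]

lemma dotProduct_sum_mul {ι κ : Type*} [Fintype ι] [Fintype κ] (x : ι → ℝ) (c : κ → ℝ)
    (u : κ → ι → ℝ) : x ⬝ᵥ (fun i => ∑ k, c k * u k i) = ∑ k, c k * (x ⬝ᵥ u k) := by
  simp only [dotProduct, mul_sum]
  rw [sum_comm]
  exact sum_congr rfl fun _ _ => sum_congr rfl fun _ _ => by ring

lemma dotProduct_le_mul_sum_of_eq_sum_mul {ι κ : Type*} [Fintype ι] [Fintype κ] {x μ : ι → ℝ}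
    {c : κ → ℝ} {u : κ → ι → ℝ} (hμ : ∀ i, μ i = ∑ k, c k * u k i) {C : ℝ}
    (hc : ∀ k, |c k| ≤ C) (hxu : ∀ k, 0 ≤ x ⬝ᵥ u k) : x ⬝ᵥ μ ≤ C * ∑ k, x ⬝ᵥ u k := by
  rw [show μ = fun i => ∑ k, c k * u k i from funext hμ, dotProduct_sum_mul, mul_sum]
  exact sum_le_sum fun k _ => mul_le_mul_of_nonneg_right ((le_abs_self _).trans (hc k)) (hxu k)

lemma abs_dotProduct_sum_mul_sub_le {ι κ : Type*} [Fintype ι] [Fintype κ] (x y : ι → ℝ)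
    {c : κ → ℝ} {C : ℝ} (hc : ∀ k, |c k| ≤ C) (u v : κ → ι → ℝ) :
    |x ⬝ᵥ (fun i => ∑ k, c k * u k i) - y ⬝ᵥ (fun i => ∑ k, c k * v k i)|
      ≤ C * ∑ k, |x ⬝ᵥ u k - y ⬝ᵥ v k| := by
  rw [dotProduct_sum_mul, dotProduct_sum_mul, ← sum_sub_distrib, mul_sum]
  refine (abs_sum_le_sum_abs _ _).trans (sum_le_sum fun k _ => ?_)
  rw [← mul_sub, abs_mul]
  exact mul_le_mul_of_nonneg_right (hc k) (abs_nonneg _)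

lemma sum_mul_sum_abs_dotProduct_sum_mul_sub_le {ι κ : Type*} [Fintype ι] [Fintype κ]
    {ρ : S → Act → ℝ} (hρ : ∀ s a, 0 ≤ ρ s a) (x y : S → Act → ι → ℝ) {c : κ → S → ℝ} {C : ℝ}
    (hc : ∀ k s', |c k s'| ≤ C) (u v : κ → S → ι → ℝ) :
    ∑ s, ∑ a, ρ s a * ∑ s', |x s a ⬝ᵥ (fun i => ∑ k, c k s' * u k s' i)
        - y s a ⬝ᵥ (fun i => ∑ k, c k s' * v k s' i)|
      ≤ C * ∑ k, ∑ s, ∑ a, ρ s a * ∑ s', |x s a ⬝ᵥ u k s' - y s a ⬝ᵥ v k s'| :=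
  calc _ ≤ ∑ s, ∑ a, ρ s a * ∑ s', C * ∑ k, |x s a ⬝ᵥ u k s' - y s a ⬝ᵥ v k s'| := by
        gcongr with s _ a _ s' _
        · exact hρ s a
        · exact abs_dotProduct_sum_mul_sub_le _ _ (fun k => hc k s') _ _
    _ = C * ∑ k, ∑ s, ∑ a, ρ s a * ∑ s', |x s a ⬝ᵥ u k s' - y s a ⬝ᵥ v k s'| := by
        simp only [mul_sum, mul_left_comm _ C]
        refine (sum_congr rfl fun _ _ => ?_).trans sum_comm
        exact (sum_congr rfl fun _ _ => sum_comm).trans sum_comm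

lemma dotProduct_mulVec_sum_smul_vecMulVec {ι : Type*} [Fintype ι] (c : S → Act → ℝ)
    (φ : S → Act → ι → ℝ) (u : ι → ℝ) :
    u ⬝ᵥ (∑ s, ∑ a, c s a • vecMulVec (φ s a) (φ s a)) *ᵥ u
      = ∑ s, ∑ a, c s a * (φ s a ⬝ᵥ u) ^ 2 := by
  simp only [sum_mulVec, dotProduct_sum, smul_mulVec, vecMulVec_mulVec, dotProduct_smul,
    op_smul_eq_smul, smul_eq_mul, dotProduct_comm u (φ _ _)]
  exact sum_congr rfl fun _ _ => sum_congr rfl fun _ _ => by ring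

lemma mul_sum_sq_le_of_le_lamMin {d : ℕ} {M : Matrix (Fin d) (Fin d) ℝ}
    (hM : ∀ v, 0 ≤ v ⬝ᵥ M *ᵥ v) {l : ℝ} (hl : l ≤ lamMin M) (u : Fin d → ℝ) :
    l * ∑ i, u i ^ 2 ≤ u ⬝ᵥ M *ᵥ u := by
  rcases (sum_nonneg fun i _ => sq_nonneg (u i)).eq_or_lt with hn | hn
  · rw [← hn, mul_zero]
    exact hM u
  · set n := ∑ i, u i ^ 2
    have hunit : ∑ i, ((√n)⁻¹ • u) i ^ 2 = 1 := by
      simp only [Pi.smul_apply, smul_eq_mul, mul_pow, ← mul_sum, inv_pow, Real.sq_sqrt hn.le]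
      exact inv_mul_cancel₀ hn.ne'
    have hquad : ((√n)⁻¹ • u) ⬝ᵥ M *ᵥ ((√n)⁻¹ • u) = (u ⬝ᵥ M *ᵥ u) / n := by
      rw [mulVec_smul, dotProduct_smul, smul_dotProduct, smul_eq_mul, smul_eq_mul, ← mul_assoc,
        ← sq, inv_pow, Real.sq_sqrt hn.le, inv_mul_eq_div]
    have hbdd : BddBelow {x | ∃ v : Fin d → ℝ, ∑ i, v i ^ 2 = 1 ∧ x = v ⬝ᵥ M *ᵥ v} :=
      ⟨0, fun _ ⟨v, _, hx⟩ => hx ▸ hM v⟩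
    have := hl.trans (hquad ▸ csInf_le hbdd ⟨_, hunit, rfl⟩)
    exact (le_div_iff₀ hn).1 this

lemma sum_mul_dotProduct_le_sqrt {ι : Type*} [Fintype ι] {ρ : S → Act → ℝ}
    (hρ0 : ∀ s a, 0 ≤ ρ s a) (hρ1 : ∑ s, ∑ a, ρ s a = 1) {φ : S → Act → ι → ℝ}
    (hφ : ∀ s a, √(∑ i, φ s a i ^ 2) ≤ 1) (w : ι → ℝ) :
    ∑ s, ∑ a, ρ s a * (φ s a ⬝ᵥ w) ≤ √(∑ i, w i ^ 2) :=
  calc ∑ s, ∑ a, ρ s a * (φ s a ⬝ᵥ w) ≤ ∑ s, ∑ a, ρ s a * √(∑ i, w i ^ 2) := by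
        gcongr with s _ a _
        · exact hρ0 s a
        · exact (Real.sum_mul_le_sqrt_mul_sqrt _ _ _).trans
            (mul_le_of_le_one_left (Real.sqrt_nonneg _) (hφ s a))
    _ = √(∑ i, w i ^ 2) := by simp only [← sum_mul, hρ1, one_mul]

theorem sum_nextState_mul_le_sqrt {d : ℕ} {ρ ρc : S → Act → ℝ} (hρ0 : ∀ s a, 0 ≤ ρ s a)
    (hρ1 : ∑ s, ∑ a, ρ s a = 1) (hρc : ∀ s a, 0 ≤ ρc s a) {P Q : S → Act → S → ℝ}
    (hP : ∀ s a, IsDist (P s a)) (hPQ : ∀ s a s', P s a s' ≤ Q s a s')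
    {φ : S → Act → Fin d → ℝ} (hφ : ∀ s a, √(∑ i, φ s a i ^ 2) ≤ 1) {μ : S → Fin d → ℝ}
    (hlow : ∀ s a s', P s a s' = φ s a ⬝ᵥ μ s') {l : ℝ} (hl : 0 < l)
    (hcov : l ≤ lamMin (∑ s, ∑ a, ρc s a • vecMulVec (φ s a) (φ s a)))
    {π : S → Act → ℝ} (hπ : ∀ s, IsDist (π s)) (e : S → Act → ℝ) :
    ∑ s, ∑ a, nextState ρ P s * π s a * e s a
      ≤ √((∑ s, nextState ρc Q s * ∑ a, e s a ^ 2) / l) := by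
  set β : S → ℝ := fun s => ∑ a, π s a * e s a
  set w : Fin d → ℝ := ∑ s, β s • μ s
  have hPw : ∀ s₀ a₀, ∑ s, P s₀ a₀ s * β s = φ s₀ a₀ ⬝ᵥ w := fun s₀ a₀ => by
    simp only [w, dotProduct_sum, dotProduct_smul, hlow, smul_eq_mul, mul_comm]
  have hlhs : ∑ s, ∑ a, nextState ρ P s * π s a * e s a
      = ∑ s₀, ∑ a₀, ρ s₀ a₀ * (φ s₀ a₀ ⬝ᵥ w) := by
    simp only [mul_assoc, ← mul_sum, sum_nextState_mul]
    exact sum_congr rfl fun s₀ _ => sum_congr rfl fun a₀ _ => by rw [← hPw]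
  have hsq : ∀ s₀ a₀, (φ s₀ a₀ ⬝ᵥ w) ^ 2 ≤ ∑ s, Q s₀ a₀ s * ∑ a, e s a ^ 2 := fun s₀ a₀ =>
    calc (φ s₀ a₀ ⬝ᵥ w) ^ 2 ≤ ∑ s, P s₀ a₀ s * β s ^ 2 :=
          hPw s₀ a₀ ▸ (hP s₀ a₀).sq_sum_mul_le β
      _ ≤ ∑ s, Q s₀ a₀ s * ∑ a, e s a ^ 2 := by
          gcongr with s
          · exact ((hP s₀ a₀).1 s).trans (hPQ s₀ a₀ s)
          · exact hPQ s₀ a₀ s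
          · exact (hπ s).sq_sum_mul_le_sum_sq (e s)
  have hw : l * ∑ i, w i ^ 2 ≤ ∑ s, nextState ρc Q s * ∑ a, e s a ^ 2 :=
    calc l * ∑ i, w i ^ 2 ≤ ∑ s₀, ∑ a₀, ρc s₀ a₀ * (φ s₀ a₀ ⬝ᵥ w) ^ 2 := by
          rw [← dotProduct_mulVec_sum_smul_vecMulVec]
          refine mul_sum_sq_le_of_le_lamMin (fun v => ?_) hcov w
          rw [dotProduct_mulVec_sum_smul_vecMulVec]
          exact sum_nonneg fun s _ => sum_nonneg fun a _ => mul_nonneg (hρc s a) (sq_nonneg _)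
      _ ≤ ∑ s₀, ∑ a₀, ρc s₀ a₀ * ∑ s, Q s₀ a₀ s * ∑ a, e s a ^ 2 := by
          gcongr with s₀ _ a₀ _
          · exact hρc s₀ a₀
          · exact hsq s₀ a₀
      _ = ∑ s, nextState ρc Q s * ∑ a, e s a ^ 2 := (sum_nextState_mul _ _ _).symm
  calc ∑ s, ∑ a, nextState ρ P s * π s a * e s a = ∑ s₀, ∑ a₀, ρ s₀ a₀ * (φ s₀ a₀ ⬝ᵥ w) := hlhs
    _ ≤ √(∑ i, w i ^ 2) := sum_mul_dotProduct_le_sqrt hρ0 hρ1 hφ w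
    _ ≤ √((∑ s, nextState ρc Q s * ∑ a, e s a ^ 2) / l) :=
        Real.sqrt_le_sqrt ((le_div_iff₀ hl).2 (by linarith))

lemma sum_sqrt_le_sqrt_card_mul_sum {ι : Type*} [Fintype ι] {x : ι → ℝ} (hx : ∀ i, 0 ≤ x i) :
    ∑ i, √(x i) ≤ √(Fintype.card ι * ∑ i, x i) := by
  refine Real.le_sqrt_of_sq_le ?_
  simpa only [Real.sq_sqrt (hx _), card_univ] using
    sq_sum_le_card_mul_sum_sq (s := univ) (f := fun i => √(x i))

lemma mul_sum_le_sqrt_of_le_sqrt {K : ℕ} {t x : Fin K → ℝ} {a b l z : ℝ} (ha : 0 ≤ a)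
    (hb : 0 ≤ b) (hl : 0 ≤ l) (hx : ∀ k, 0 ≤ x k) (ht : ∀ k, t k ≤ √(a * b * x k / l))
    (hz : ∑ k, x k ≤ z) : a * ∑ k, t k ≤ √(b * a ^ 3 * K * z / l) :=
  calc a * ∑ k, t k ≤ a * ∑ k, √(a * b * x k / l) := by gcongr with k; exact ht k
    _ ≤ a * √(K * ∑ k, a * b * x k / l) := by
        gcongr
        simpa only [Fintype.card_fin] using sum_sqrt_le_sqrt_card_mul_sum
          (x := fun k => a * b * x k / l) fun k => by have := hx k; positivity
    _ ≤ a * √(K * (a * b * z / l)) := by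
        simp only [mul_div_assoc, ← mul_sum, ← sum_div]
        gcongr
    _ = √(b * a ^ 3 * K * z / l) := by
        rw [show b * a ^ 3 * K * z / l = a ^ 2 * (K * (a * b * z / l)) by ring,
          Real.sqrt_mul (sq_nonneg _), Real.sqrt_sq ha]

lemma sqrt_sum_sq_sum_le {κ ι : Type*} [Fintype κ] [Fintype ι] (y : κ → ι → ℝ) :
    √(∑ i, (∑ k, y k i) ^ 2) ≤ ∑ k, √(∑ i, y k i ^ 2) := by
  simpa [EuclideanSpace.norm_eq] using
    norm_sum_le univ fun k => (WithLp.toLp 2 (y k) : EuclideanSpace ℝ ι)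

lemma sqrt_sum_sq_sum_mul_le_mul [Nonempty S] {ι : Type*} [Fintype ι] (μ : S → ι → ℝ) {B : ℝ}
    (hB : ∀ g : S → ℝ, (∀ s, -1 ≤ g s ∧ g s ≤ 1) → √(∑ i, (∑ s, g s * μ s i) ^ 2) ≤ B)
    {w : S → ℝ} {M : ℝ} (hw : ∀ s, |w s| ≤ M) :
    √(∑ i, (∑ s, w s * μ s i) ^ 2) ≤ M * B := by
  obtain ⟨s₀⟩ := ‹Nonempty S›
  rcases ((abs_nonneg _).trans (hw s₀)).eq_or_lt with hM | hM
  · have hw0 : ∀ s, w s = 0 := fun s => abs_nonpos_iff.1 (hM ▸ hw s)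
    simp [hw0, ← hM]
  · have hscale : ∀ i, ∑ s, w s * μ s i = M * ∑ s, w s / M * μ s i := fun i => by
      rw [mul_sum]; exact sum_congr rfl fun s _ => by field_simp
    have hbox : ∀ s, -1 ≤ w s / M ∧ w s / M ≤ 1 := fun s =>
      abs_le.1 <| by rw [abs_div, abs_of_pos hM, div_le_one hM]; exact hw s
    calc √(∑ i, (∑ s, w s * μ s i) ^ 2)
        = M * √(∑ i, (∑ s, w s / M * μ s i) ^ 2) := by
          simp only [hscale, mul_pow, ← mul_sum]
          rw [Real.sqrt_mul (sq_nonneg M), Real.sqrt_sq hM.le]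
      _ ≤ M * B := mul_le_mul_of_nonneg_left (hB _ hbox) hM.le

lemma sqrt_sum_sq_sum_mul_sum_le [Nonempty S] {ι κ : Type*} [Fintype ι] [Fintype κ]
    (c : κ → S → ℝ) (μ : κ → S → ι → ℝ) {B : ℝ}
    (hB : ∀ k (g : S → ℝ), (∀ s, -1 ≤ g s ∧ g s ≤ 1) → √(∑ i, (∑ s, g s * μ k s i) ^ 2) ≤ B)
    {g : S → ℝ} (hg : ∀ s, 0 ≤ g s ∧ g s ≤ 1) :
    √(∑ i, (∑ s, g s * ∑ k, c k s * μ k s i) ^ 2)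
      ≤ (∑ k, univ.sup' univ_nonempty fun s => |c k s|) * B := by
  have hweight : ∀ k s, |g s * c k s| ≤ univ.sup' univ_nonempty fun s => |c k s| := fun k s => by
    rw [abs_mul, abs_of_nonneg (hg s).1]
    exact (mul_le_of_le_one_left (abs_nonneg _) (hg s).2).trans
      (le_sup' (fun s => |c k s|) (mem_univ s))
  calc √(∑ i, (∑ s, g s * ∑ k, c k s * μ k s i) ^ 2)
      = √(∑ i, (∑ k, ∑ s, g s * c k s * μ k s i) ^ 2) := by
        simp only [mul_sum, mul_assoc]
        exact congrArg _ (sum_congr rfl fun i _ => congrArg (· ^ 2) sum_comm)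
    _ ≤ ∑ k, √(∑ i, (∑ s, g s * c k s * μ k s i) ^ 2) := sqrt_sum_sq_sum_le _
    _ ≤ ∑ k, (univ.sup' univ_nonempty fun s => |c k s|) * B := by
        gcongr with k
        exact sqrt_sum_sq_sum_mul_le_mul (μ k) (hB k) (hweight k)
    _ = (∑ k, univ.sup' univ_nonempty fun s => |c k s|) * B := (sum_mul _ _ _).symm

theorem target_model_error_cross_sampling_general [Nonempty S]
    (H d K : ℕ)
    (d0 : S → ℝ) (hd0 : IsDist d0)
    (Pk : Fin K → ℕ → S → Act → S → ℝ) (hPk : ∀ k h s a, IsDist (Pk k h s a))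
    (Pt : ℕ → S → Act → S → ℝ) (hPt : ∀ h s a, IsDist (Pt h s a))
    (φstar : ℕ → S → Act → Fin d → ℝ)
    (hφ : ∀ h s a, Real.sqrt (∑ i, φstar h s a i ^ 2) ≤ 1)
    (μstar : Fin K → ℕ → S → Fin d → ℝ) (μstarT : ℕ → S → Fin d → ℝ)
    (hlowk : ∀ k h s a s', Pk k h s a s' = ∑ i, φstar h s a i * μstar k h s' i)
    (hlowt : ∀ h s a s', Pt h s a s' = ∑ i, φstar h s a i * μstarT h s' i)
    (α : Fin K → ℕ → S → ℝ) (αmax : ℝ)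
    (hspan : ∀ h s' i, μstarT h s' i = ∑ k, α k h s' * μstar k h s' i)
    (hαmax : ∀ k h s', |α k h s'| ≤ αmax)
    (πk : Fin K → ℕ → S → Act → ℝ) (hπk : ∀ k h s, IsDist (πk k h s))
    (lmin : ℝ) (hlmin : 0 < lmin)
    (hcov : ∀ k h, h < H →
      lmin ≤ lamMin (∑ s, ∑ a, occ d0 (πk k) (Pk k) h s a •
        vecMulVec (φstar h s a) (φstar h s a)))
    (φhat : ℕ → S → Act → Fin d → ℝ) (μhat : Fin K → ℕ → S → Fin d → ℝ)
    (ζ : ℝ)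
    (hmle : ∀ h, 1 ≤ h → h < H →
      ∑ k, ∑ j, ∑ s, ∑ a,
        ((1 / (Fintype.card Act : ℝ)) *
            ∑ s₀, ∑ a₀, occ d0 (πk k) (Pk k) (h - 1) s₀ a₀ * Pk j (h - 1) s₀ a₀ s) *
          (∑ s', |(∑ i, φhat h s a i * μhat k h s' i)
                  - (∑ i, φstar h s a i * μstar k h s' i)|) ^ 2
        ≤ ζ) :
    (∀ h, 1 ≤ h → h < H → ∀ (π : ℕ → S → Act → ℝ), (∀ t s, IsDist (π t s)) →
      ∑ s, ∑ a, occ d0 π Pt h s a *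
          (∑ s', |(∑ i, φhat h s a i * (∑ k, α k h s' * μhat k h s' i)) - Pt h s a s'|)
        ≤ Real.sqrt ((Fintype.card Act : ℝ) * αmax ^ 3 * (K : ℝ) * ζ / lmin))
    ∧ ((∀ k h (g : S → ℝ), (∀ s', -1 ≤ g s' ∧ g s' ≤ 1) →
          Real.sqrt (∑ i, (∑ s', g s' * μhat k h s' i) ^ 2) ≤ Real.sqrt d) →
        ∀ h, 1 ≤ h → h < H → ∀ (g : S → ℝ), (∀ s', 0 ≤ g s' ∧ g s' ≤ 1) →
          Real.sqrt (∑ i, (∑ s', g s' * (∑ k, α k h s' * μhat k h s' i)) ^ 2)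
            ≤ (∑ k, Finset.univ.sup' Finset.univ_nonempty (fun s' : S => |α k h s'|))
              * Real.sqrt d) := by
  refine ⟨fun h h1 hH π hπ => ?_, fun hnorm h _ _ _ hg =>
    sqrt_sum_sq_sum_mul_sum_le (fun k => α k h) (fun k => μhat k h) (fun k => hnorm k h) hg⟩
  obtain ⟨m, rfl⟩ : ∃ m, h = m + 1 := ⟨h - 1, by omega⟩
  have hocc : ∀ t s a, 0 ≤ occ d0 π Pt t s a :=
    occ_nonneg hd0.1 (fun t s => (hπ t s).1) fun t s a => (hPt t s a).1
  have hocck : ∀ k t s a, 0 ≤ occ d0 (πk k) (Pk k) t s a := fun k =>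
    occ_nonneg hd0.1 (fun t s => (hπk k t s).1) fun t s a => (hPk k t s a).1
  set err : Fin K → S → Act → ℝ := fun k s a => ∑ s',
    |φhat (m + 1) s a ⬝ᵥ μhat k (m + 1) s' - φstar (m + 1) s a ⬝ᵥ μstar k (m + 1) s'|
  set E : Fin K → ℝ := fun k =>
    ∑ j, ∑ s, ∑ a, uniformNext (occ d0 (πk k) (Pk k) m) (Pk j m) s a * err k s a ^ 2
  have hLHS : ∑ s, ∑ a, occ d0 π Pt (m + 1) s a *
        ∑ s', |(∑ i, φhat (m + 1) s a i * (∑ k, α k (m + 1) s' * μhat k (m + 1) s' i))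
          - Pt (m + 1) s a s'|
      ≤ αmax * ∑ k, ∑ s, ∑ a, occ d0 π Pt (m + 1) s a * err k s a := by
    simp only [hlowt, hspan]
    exact sum_mul_sum_abs_dotProduct_sum_mul_sub_le (hocc _) _ _ (fun k => hαmax k _) _ _
  obtain hK | ⟨⟨k₀⟩⟩ := isEmpty_or_nonempty (Fin K)
  · exact hLHS.trans (by rw [univ_eq_empty, sum_empty, mul_zero]; positivity)
  have hPQ : ∀ s a s', Pt m s a s' ≤ αmax * ∑ j, Pk j m s a s' := fun s a s' => by
    rw [hlowt]
    simp only [hlowk]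
    exact dotProduct_le_mul_sum_of_eq_sum_mul (hspan m s') (fun j => hαmax j m s')
      fun j => ((hPk j m s a).1 s').trans_eq (hlowk j m s a s')
  have hT : ∀ k, ∑ s, ∑ a, occ d0 π Pt (m + 1) s a * err k s a
      ≤ √(αmax * Fintype.card Act * E k / lmin) := fun k => by
    have := sum_nextState_mul_le_sqrt (hocc m) (sum_sum_occ hd0.2 (fun t s => (hπ t s).2)
      (fun t s a => (hPt t s a).2) m) (hocck k m) (hPt m) hPQ (hφ m) (hlowt m) hlmin
      (hcov k m (by omega)) (hπ (m + 1)) (err k)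
    rwa [sum_nextState_mul_sum_eq_uniformNext] at this
  have hE : ∀ k, 0 ≤ E k := fun k => sum_nonneg fun j _ => sum_nonneg fun s _ =>
    sum_nonneg fun a _ => mul_nonneg
      (uniformNext_nonneg (hocck k m) (fun s a => (hPk j m s a).1) s a) (sq_nonneg _)
  have hEζ := hmle (m + 1) h1 hH
  rw [Nat.add_sub_cancel] at hEζ
  exact hLHS.trans <| mul_sum_le_sqrt_of_le_sqrt ((abs_nonneg _).trans (hαmax k₀ 0
    (Classical.arbitrary S))) (Nat.cast_nonneg _) hlmin.le hE hT hEζ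

/-- **Target model error under cross-sampling** (steps `h ≥ 1`).
Under the shared-feature low-rank structure, the point-wise linear span condition, the
eigenvalue coverage of the exploratory policies `π_k`, and the cross-sampled MLE
guarantee, the representation `φ̂` with `μ̃_h(s') := Σ_k α_{k;h}(s') μ̂_{k;h}(s')` is an
approximately linear model of the target task in an average sense, under every policy:
the expected TV error at step `h` is at most `√(A αmax³ K ζ / λmin)`.  Moreover, under
the `√d` normalization of the `μ̂`'s, `‖Σ_{s'} g(s') μ̃_h(s')‖₂ ≤ ᾱ √d` for every
`g : S → [0,1]`, with `ᾱ := Σ_k max_{s'} |α_{k;h}(s')|`. -/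
theorem target_model_error_cross_sampling [Nonempty S]
    (H d K : ℕ)
    (d0 : S → ℝ) (hd0 : IsDist d0)
    (Pk : Fin K → ℕ → S → Act → S → ℝ) (hPk : ∀ k h s a, IsDist (Pk k h s a))
    (Pt : ℕ → S → Act → S → ℝ) (hPt : ∀ h s a, IsDist (Pt h s a))
    (φstar : ℕ → S → Act → Fin d → ℝ)
    (hφ : ∀ h s a, Real.sqrt (∑ i, φstar h s a i ^ 2) ≤ 1)
    (μstar : Fin K → ℕ → S → Fin d → ℝ) (μstarT : ℕ → S → Fin d → ℝ)
    (hlowk : ∀ k h s a s', Pk k h s a s' = ∑ i, φstar h s a i * μstar k h s' i)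
    (hlowt : ∀ h s a s', Pt h s a s' = ∑ i, φstar h s a i * μstarT h s' i)
    (α : Fin K → ℕ → S → ℝ) (αmax : ℝ)
    (hspan : ∀ h s' i, μstarT h s' i = ∑ k, α k h s' * μstar k h s' i)
    (hαmax : ∀ k h s', |α k h s'| ≤ αmax)
    (πk : Fin K → ℕ → S → Act → ℝ) (hπk : ∀ k h s, IsDist (πk k h s))
    (lmin : ℝ) (hlmin : 0 < lmin)
    (hcov : ∀ k h, h < H →
      lmin ≤ lamMin (∑ s, ∑ a, occ d0 (πk k) (Pk k) h s a •
        vecMulVec (φstar h s a) (φstar h s a)))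
    (φhat : ℕ → S → Act → Fin d → ℝ) (μhat : Fin K → ℕ → S → Fin d → ℝ)
    (ζ : ℝ) (hζ : 0 ≤ ζ)
    (hmle : ∀ h, 1 ≤ h → h < H →
      ∑ k, ∑ j, ∑ s, ∑ a,
        ((1 / (Fintype.card Act : ℝ)) *
            ∑ s₀, ∑ a₀, occ d0 (πk k) (Pk k) (h - 1) s₀ a₀ * Pk j (h - 1) s₀ a₀ s) *
          (∑ s', |(∑ i, φhat h s a i * μhat k h s' i)
                  - (∑ i, φstar h s a i * μstar k h s' i)|) ^ 2
        ≤ ζ) :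
    (∀ h, 1 ≤ h → h < H → ∀ (π : ℕ → S → Act → ℝ), (∀ t s, IsDist (π t s)) →
      ∑ s, ∑ a, occ d0 π Pt h s a *
          (∑ s', |(∑ i, φhat h s a i * (∑ k, α k h s' * μhat k h s' i)) - Pt h s a s'|)
        ≤ Real.sqrt ((Fintype.card Act : ℝ) * αmax ^ 3 * (K : ℝ) * ζ / lmin))
    ∧ ((∀ k h (g : S → ℝ), (∀ s', -1 ≤ g s' ∧ g s' ≤ 1) →
          Real.sqrt (∑ i, (∑ s', g s' * μhat k h s' i) ^ 2) ≤ Real.sqrt d) →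
        ∀ h, 1 ≤ h → h < H → ∀ (g : S → ℝ), (∀ s', 0 ≤ g s' ∧ g s' ≤ 1) →
          Real.sqrt (∑ i, (∑ s', g s' * (∑ k, α k h s' * μhat k h s' i)) ^ 2)
            ≤ (∑ k, Finset.univ.sup' Finset.univ_nonempty (fun s' : S => |α k h s'|))
              * Real.sqrt d) :=
  target_model_error_cross_sampling_general H d K d0 hd0 Pk hPk Pt hPt φstar hφ μstar μstarT hlowk
    hlowt α αmax hspan hαmax πk hπk lmin hlmin hcov φhat μhat ζ hmle
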